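/- As t → +∞, e^{2πt}·φ'_eff(t)/t converges to −8π; that is, φ'_eff(t) ∼ −8πt·e^{−2πt} as t → ∞. -/

import Mathlib

open Real Filter

/-- The derivative of the wall-interaction force `φ(s) = s/sinh²(πs)`, namely
`φ'(s) = 1/sinh²(πs) − 2πs·cosh(πs)/sinh³(πs)`. -/
noncomputable def phi' (s : ℝ) : ℝ :=
  1 / (Real.sinh (Real.pi * s)) ^ 2
    - 2 * Real.pi * s * Real.cosh (Real.pi * s) / (Real.sinh (Real.pi * s)) ^ 3

/-!
With `q = e^{-2πs}`, one has `e^{2πs} φ'(s) / s = 4/(s(1-q)²) − 8π(1+q)/(1-q)³`, which tends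
to `−8π`. The `k`-th term of `e^{2πt} φ'_eff(t) / t` is therefore `k³ e^{-2π(k-1)t}` times this
normalized quantity at `kt`: it tends to `−8π` for `k = 1` and to `0` for `k ≥ 2`, and for large
`t` it is dominated by `C k³ e^{-2π(k-1)}`. Tannery's theorem lets the limit pass through the sum.
-/

open Topology

lemma summable_add_one_pow_mul_exp_neg_nat_mul (m : ℕ) {r : ℝ} (hr : 0 < r) :
    Summable fun k : ℕ => ((k : ℝ) + 1) ^ m * exp (-r * k) := by
  have h := ((summable_nat_add_iff 1).mpr (summable_pow_mul_exp_neg_nat_mul m hr)).mul_left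
    (exp r)
  refine h.congr fun k => ?_
  push_cast
  rw [mul_left_comm, ← exp_add]
  ring_nf

noncomputable def phi'Normalized (s : ℝ) : ℝ := exp (2 * π * s) * phi' s / s

lemma phi'Normalized_eq {s : ℝ} (hs : 0 < s) :
    phi'Normalized s = 4 * s⁻¹ / (1 - exp (-(2 * π * s))) ^ 2
      - 8 * π * (1 + exp (-(2 * π * s))) / (1 - exp (-(2 * π * s))) ^ 3 := by
  set x := exp (π * s) with hx
  have hx1 : 1 < x := one_lt_exp_iff.mpr (by positivity)
  have hx2 : exp (2 * π * s) = x ^ 2 := by rw [hx, ← exp_nat_mul]; ring_nf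
  have hx2' : exp (-(2 * π * s)) = (x ^ 2)⁻¹ := by rw [exp_neg, hx2]
  have hsub : x ^ 2 - 1 ≠ 0 := by nlinarith
  rw [phi'Normalized, phi', sinh_eq, cosh_eq, exp_neg, ← hx, hx2, hx2']
  field_simp
  ring

lemma tendsto_phi'Normalized : Tendsto phi'Normalized atTop (𝓝 (-(8 * π))) := by
  have hq : Tendsto (fun s : ℝ => exp (-(2 * π * s))) atTop (𝓝 0) :=
    tendsto_exp_neg_atTop_nhds_zero.comp (tendsto_id.const_mul_atTop (by positivity))
  have h := ((tendsto_inv_atTop_zero.const_mul 4).div ((hq.const_sub 1).pow 2) (by norm_num)).sub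
    (((hq.const_add 1).const_mul (8 * π)).div ((hq.const_sub 1).pow 3) (by norm_num))
  norm_num at h
  refine h.congr' ?_
  filter_upwards [eventually_gt_atTop 0] with s hs
  exact (phi'Normalized_eq hs).symm

lemma exp_mul_sq_mul_phi'_div {t : ℝ} (ht : 0 < t) (k : ℕ) :
    exp (2 * π * t) * (((k : ℝ) + 1) ^ 2 * phi' (((k : ℝ) + 1) * t)) / t
      = ((k : ℝ) + 1) ^ 3 * exp (-(2 * π * t) * k) * phi'Normalized (((k : ℝ) + 1) * t) := by
  have hexp : exp (2 * π * t) = exp (-(2 * π * t) * k) * exp (2 * π * (((k : ℝ) + 1) * t)) := by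
    rw [← exp_add]; ring_nf
  rw [phi'Normalized, hexp]
  field_simp

lemma tendsto_add_one_pow_mul_exp_mul_phi'Normalized (k : ℕ) :
    Tendsto (fun t => ((k : ℝ) + 1) ^ 3 * exp (-(2 * π * t) * k)
        * phi'Normalized (((k : ℝ) + 1) * t))
      atTop (𝓝 (if k = 0 then -(8 * π) else 0)) := by
  have hg : Tendsto (fun t : ℝ => phi'Normalized (((k : ℝ) + 1) * t)) atTop (𝓝 (-(8 * π))) :=
    tendsto_phi'Normalized.comp (tendsto_id.const_mul_atTop (by positivity))
  rcases Nat.eq_zero_or_pos k with rfl | hk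
  · simpa using hg
  · have hexp : Tendsto (fun t : ℝ => exp (-(2 * π * t) * k)) atTop (𝓝 0) := by
      refine tendsto_exp_atBot.comp (Tendsto.atBot_mul_const (by positivity) ?_)
      exact tendsto_neg_atTop_atBot.comp (tendsto_id.const_mul_atTop (by positivity))
    simpa [hk.ne'] using (hexp.const_mul (((k : ℝ) + 1) ^ 3)).mul hg

lemma norm_add_one_pow_mul_exp_mul_phi'Normalized_le {C T t : ℝ}
    (hC : ∀ s ≥ T, ‖phi'Normalized s‖ ≤ C) (ht : max T 1 ≤ t) (k : ℕ) :
    ‖((k : ℝ) + 1) ^ 3 * exp (-(2 * π * t) * k) * phi'Normalized (((k : ℝ) + 1) * t)‖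
      ≤ C * (((k : ℝ) + 1) ^ 3 * exp (-(2 * π) * k)) := by
  have hT : T ≤ t := le_of_max_le_left ht
  have h1 : 1 ≤ t := le_of_max_le_right ht
  have hk : (0 : ℝ) ≤ k := k.cast_nonneg
  have hs : T ≤ ((k : ℝ) + 1) * t := by nlinarith
  have hexp : exp (-(2 * π * t) * k) ≤ exp (-(2 * π) * k) :=
    exp_le_exp.mpr (by nlinarith [pi_pos, mul_nonneg pi_pos.le hk])
  rw [norm_mul, norm_mul, Real.norm_of_nonneg (by positivity), Real.norm_of_nonneg (by positivity)]
  calc _ ≤ ((k : ℝ) + 1) ^ 3 * exp (-(2 * π) * k) * C := by gcongr; exact hC _ hs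
    _ = _ := by ring

/-- As `t → +∞`, `e^{2πt}·φ'_eff(t)/t → −8π`, i.e. `φ'_eff(t) ∼ −8πt·e^{−2πt}` at
infinity, where `φ'_eff(t) = Σ_{k=1}^∞ k²·φ'(kt)`. -/
theorem stmt13 :
    Tendsto (fun t : ℝ =>
        Real.exp (2 * Real.pi * t) * (∑' k : ℕ, ((k : ℝ) + 1) ^ 2 * phi' (((k : ℝ) + 1) * t)) / t)
      atTop (nhds (-(8 * Real.pi))) := by
  obtain ⟨C, hC⟩ := tendsto_phi'Normalized.norm.isBoundedUnder_le
  obtain ⟨T, hCT⟩ := eventually_atTop.mp (eventually_map.mp hC)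
  have hlim := tendsto_tsum_of_dominated_convergence
    ((summable_add_one_pow_mul_exp_neg_nat_mul 3 (by positivity : 0 < 2 * π)).mul_left C)
    tendsto_add_one_pow_mul_exp_mul_phi'Normalized
    (eventually_atTop.mpr ⟨max T 1, fun t ht =>
      norm_add_one_pow_mul_exp_mul_phi'Normalized_le hCT ht⟩)
  rw [tsum_ite_eq] at hlim
  refine hlim.congr' ?_
  filter_upwards [eventually_gt_atTop 0] with t ht
  rw [← tsum_mul_left, ← tsum_div_const]
  exact tsum_congr fun k => (exp_mul_sq_mul_phi'_div ht k).symm
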